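/- arXiv:1510.09037 — 4 statements merged into one kernel-verified Lean document; each statement's English description precedes it below -/
import Mathlib

section
/- For any column-wise alignment of k distinct length-1 sequences into l columns (each row containing one character and l−1 gaps, column i containing k_i ≥ 1 characters), the unit-metric sum-of-pairs cost ∑_{i=1}^l (C(k_i,2) + (k−k_i)·k_i) is at most k^2 − k/2 − k^2/(2l), and hence at most k^2 − k. -/
/-- The unit-metric cost of an `l`-column alignment of `k` distinct length-1 sequences with
column sizes `k₁, …, k_l ≥ 1` is at most `k² - k/2 - k²/(2l)`, hence at most `k² - k`. -/
theorem stmt_2 (k l : ℕ) (hk : 1 ≤ k) (hl : l ≤ k) (f : Fin l → ℕ)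
    (hpos : ∀ i, 0 < f i) (hsum : ∑ i, f i = k) :
    ((∑ i, (((f i).choose 2 : ℚ) + ((k : ℚ) - f i) * f i)) ≤
        (k : ℚ) ^ 2 - (k : ℚ) / 2 - (k : ℚ) ^ 2 / (2 * l)) ∧
    (∑ i, ((f i).choose 2 + (k - f i) * f i)) ≤ k ^ 2 - k := by
  have hl1 : 1 ≤ l := by
    rcases Nat.eq_zero_or_pos l with h | h
    · subst h; simp at hsum; omega
    · exact h
  have hfk : ∀ i, f i ≤ k := by
    intro i
    rw [← hsum]
    exact Finset.single_le_sum (fun j _ => Nat.zero_le _) (Finset.mem_univ i)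
  have hsumQ : (∑ i, (f i : ℚ)) = k := by exact_mod_cast hsum
  set S : ℚ := ∑ i, (f i : ℚ) ^ 2 with hS
  have hkey : (∑ i, (((f i).choose 2 : ℚ) + ((k : ℚ) - f i) * f i))
      = (k : ℚ) ^ 2 - (k : ℚ) / 2 - S / 2 := by
    have h1 : ∀ i ∈ Finset.univ, ((f i).choose 2 : ℚ) + ((k : ℚ) - f i) * f i
        = (k : ℚ) * f i - (f i : ℚ) / 2 - (f i : ℚ) ^ 2 / 2 := by
      intro i _
      rw [Nat.cast_choose_two]
      ring
    rw [Finset.sum_congr rfl h1]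
    rw [Finset.sum_sub_distrib, Finset.sum_sub_distrib, ← Finset.mul_sum,
      ← Finset.sum_div, ← Finset.sum_div, hsumQ]
    ring
  have hCS : (k : ℚ) ^ 2 ≤ (l : ℚ) * S := by
    have := sq_sum_le_card_mul_sum_sq (s := (Finset.univ : Finset (Fin l)))
      (f := fun i => (f i : ℚ))
    simpa [hsumQ] using this
  have hSk : (k : ℚ) ≤ S := by
    rw [← hsumQ]
    refine Finset.sum_le_sum fun i _ => ?_
    have : (1 : ℚ) ≤ (f i : ℚ) := by exact_mod_cast hpos i
    nlinarith
  have hl0 : (0 : ℚ) < l := by exact_mod_cast hl1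
  constructor
  · rw [hkey]
    have : (k : ℚ) ^ 2 / (2 * l) ≤ S / 2 := by
      rw [div_le_div_iff₀ (by linarith) (by norm_num)]
      nlinarith
    linarith
  · have hcast : ((∑ i, ((f i).choose 2 + (k - f i) * f i) : ℕ) : ℚ)
        = ∑ i, (((f i).choose 2 : ℚ) + ((k : ℚ) - f i) * f i) := by
      push_cast
      refine Finset.sum_congr rfl fun i _ => ?_
      rw [Nat.cast_sub (hfk i)]
    have hk2 : k ≤ k ^ 2 := Nat.le_self_pow two_ne_zero k
    rw [← Nat.cast_le (α := ℚ), Nat.cast_sub hk2, hcast, hkey]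
    push_cast
    linarith
end

section
/- Let d be any metric on Σ ∪ {−}. Every multiple alignment (sum-of-pairs scoring) of k pairwise distinct length-1 sequences a_1,...,a_k has cost at least C = ∑_{1≤i<j≤k} d(a_i,a_j), which is the cost of the trivial alignment; hence the trivial alignment is optimal for any metric. -/
/-- Sum-of-pairs cost of a `k × l` alignment matrix under a score scheme `d`. -/
def sopCostD {σ : Type*} {k l : ℕ} (d : Option σ → Option σ → ℝ)
    (M : Fin k → Fin l → Option σ) : ℝ :=
  ∑ i, ∑ i' ∈ Finset.Ioi i, ∑ j, d (M i j) (M i' j)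

/-- `M` is an alignment of the length-1 sequences `a i`: each row has exactly one non-gap
entry, equal to the corresponding character. -/
def IsAlignment1 {σ : Type*} {k l : ℕ} (a : Fin k → σ) (M : Fin k → Fin l → Option σ) : Prop :=
  ∀ i, ∃ j, M i j = some (a i) ∧ ∀ j', j' ≠ j → M i j' = none

/-- For any metric `d` on `Σ ∪ {−}`, every alignment of `k` pairwise distinct length-1
sequences costs at least `C = ∑_{i<j} d(aᵢ,aⱼ)`, the cost of the trivial alignment; hence
the trivial alignment is optimal. -/
theorem stmt_7 {σ : Type*} {k : ℕ} (d : Option σ → Option σ → ℝ)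
    (hsymm : ∀ x y, d x y = d y x) (hnonneg : ∀ x y, 0 ≤ d x y)
    (hself : ∀ x, d x x = 0) (htri : ∀ x y z, d x y ≤ d x z + d z y)
    (a : Fin k → σ) (hinj : Function.Injective a) :
    (∀ l (M : Fin k → Fin l → Option σ), IsAlignment1 a M →
      (∑ i, ∑ j ∈ Finset.Ioi i, d (some (a i)) (some (a j))) ≤ sopCostD d M) ∧
    sopCostD d (fun i (_ : Fin 1) => some (a i)) =
      ∑ i, ∑ j ∈ Finset.Ioi i, d (some (a i)) (some (a j)) := by
  constructor
  · intro l M hM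
    unfold sopCostD
    refine Finset.sum_le_sum fun i _ => Finset.sum_le_sum fun i' _ => ?_
    obtain ⟨j1, h1, h1'⟩ := hM i
    obtain ⟨j2, h2, h2'⟩ := hM i'
    by_cases hj : j1 = j2
    · subst hj
      calc d (some (a i)) (some (a i')) = d (M i j1) (M i' j1) := by rw [h1, h2]
        _ ≤ ∑ j, d (M i j) (M i' j) :=
          Finset.single_le_sum (fun j _ => hnonneg _ _) (Finset.mem_univ j1)
    · have hsub : ({j1, j2} : Finset (Fin l)) ⊆ Finset.univ := Finset.subset_univ _
      calc d (some (a i)) (some (a i'))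
          ≤ d (some (a i)) none + d none (some (a i')) := htri _ _ _
        _ = d (M i j1) (M i' j1) + d (M i j2) (M i' j2) := by
            rw [h1, h2, h2' j1 hj, h1' j2 (Ne.symm hj)]
        _ = ∑ j ∈ ({j1, j2} : Finset (Fin l)), d (M i j) (M i' j) :=
            (Finset.sum_pair (f := fun j => d (M i j) (M i' j)) hj).symm
        _ ≤ ∑ j, d (M i j) (M i' j) :=
            Finset.sum_le_sum_of_subset_of_nonneg hsub (fun j _ _ => hnonneg _ _)
  · unfold sopCostD
    refine Finset.sum_congr rfl fun i _ => Finset.sum_congr rfl fun i' _ => ?_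
    simp
end

section
/- Let d be a metric on Σ ∪ {−} and a_1,...,a_k ∈ Σ. Suppose an alignment on l ≥ 3 columns has k_1 characters in its first column and k_2 in its second, with k' = k_1 + k_2. Then the cost of the first two columns is at least the cost of the single column obtained by merging them: ∑_{1≤i<j≤k_1} d(a_i,a_j) + k_2·∑_{i≤k_1} d(a_i,−) + ∑_{k_1<i<j≤k'} d(a_i,a_j) + k_1·∑_{k_1<i≤k'} d(a_i,−) + (k−k')·∑_{i≤k'} d(a_i,−) ≥ ∑_{1≤i<j≤k'} d(a_i,a_j) + (k−k')·∑_{i≤k'} d(a_i,−). -/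
/-- Merging the first two columns (with `k₁` resp. `k₂` characters, `k' = k₁ + k₂ ≤ k`) of an
alignment of length-1 sequences over a metric `d` does not increase the cost. -/
theorem stmt_8 {α : Type*} (d : α → α → ℝ) (gap : α)
    (hsymm : ∀ x y, d x y = d y x) (hnonneg : ∀ x y, 0 ≤ d x y)
    (hself : ∀ x, d x x = 0) (htri : ∀ x y z, d x y ≤ d x z + d z y)
    (k k₁ k₂ : ℕ) (hk : k₁ + k₂ ≤ k)
    (a : Fin k₁ → α) (b : Fin k₂ → α)
    (ha : ∀ i, a i ≠ gap) (hb : ∀ j, b j ≠ gap) :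
    (∑ i, ∑ j ∈ Finset.Ioi i, d (a i) (a j)) + (k₂ : ℝ) * (∑ i, d (a i) gap) +
      (∑ i, ∑ j ∈ Finset.Ioi i, d (b i) (b j)) + (k₁ : ℝ) * (∑ j, d (b j) gap) +
      ((k - (k₁ + k₂) : ℕ) : ℝ) * ((∑ i, d (a i) gap) + (∑ j, d (b j) gap)) ≥
    ((∑ i, ∑ j ∈ Finset.Ioi i, d (a i) (a j)) +
      (∑ i, ∑ j ∈ Finset.Ioi i, d (b i) (b j)) + ∑ i, ∑ j, d (a i) (b j)) +
      ((k - (k₁ + k₂) : ℕ) : ℝ) * ((∑ i, d (a i) gap) + (∑ j, d (b j) gap)) := by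
  have key : (∑ i, ∑ j, d (a i) (b j)) ≤
      (k₂ : ℝ) * (∑ i, d (a i) gap) + (k₁ : ℝ) * (∑ j, d (b j) gap) := by
    calc (∑ i, ∑ j, d (a i) (b j))
        ≤ ∑ i, ∑ j, (d (a i) gap + d (b j) gap) := by
          apply Finset.sum_le_sum; intro i _
          apply Finset.sum_le_sum; intro j _
          rw [hsymm (b j) gap]; exact htri _ _ _
      _ = (k₂ : ℝ) * (∑ i, d (a i) gap) + (k₁ : ℝ) * (∑ j, d (b j) gap) := by
          simp [Finset.sum_add_distrib, Finset.mul_sum, Finset.sum_comm, mul_comm]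
  linarith
end

section
/- Using the unit metric, every multiple alignment (sum-of-pairs scoring) of k length-2 sequences s_1 = a_{i_1}a_{i_{k+1}}, ..., s_k = a_{i_k}a_{i_{2k}} has cost at least the cost of the trivial alignment, namely ∑_{1≤j<l≤k} d(a_{i_j}, a_{i_l}) + ∑_{k+1≤j<l≤2k} d(a_{i_j}, a_{i_l}); hence the trivial alignment is optimal. -/
/-- Unit metric on `Σ ∪ {−}` (gaps modelled by `none`): 0 for equal entries, 1 otherwise. -/
def unitCost {σ : Type*} [DecidableEq σ] (x y : Option σ) : ℕ := if x = y then 0 else 1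

/-- Sum-of-pairs cost of a `k × t` alignment matrix under the unit metric. -/
def sopCost {σ : Type*} [DecidableEq σ] {k t : ℕ} (M : Fin k → Fin t → Option σ) : ℕ :=
  ∑ m, ∑ m' ∈ Finset.Ioi m, ∑ j, unitCost (M m j) (M m' j)

/-- `M` is an alignment of the length-2 sequences `s₁ m · s₂ m`: each row has exactly two
non-gap entries, equal (in order) to the two characters of the corresponding sequence. -/
def IsAlignment2 {σ : Type*} {k t : ℕ} (s₁ s₂ : Fin k → σ)
    (M : Fin k → Fin t → Option σ) : Prop :=
  ∀ m, ∃ j₁ j₂ : Fin t, j₁ < j₂ ∧ M m j₁ = some (s₁ m) ∧ M m j₂ = some (s₂ m) ∧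
    ∀ j, j ≠ j₁ → j ≠ j₂ → M m j = none

lemma unitCost_le_one {σ : Type*} [DecidableEq σ] (x y : Option σ) : unitCost x y ≤ 1 := by
  unfold unitCost; split <;> simp

lemma pair_ge {σ : Type*} [DecidableEq σ] {t : ℕ} (r r' : Fin t → Option σ)
    (a b a' b' : σ) (j₁ j₂ j₁' j₂' : Fin t)
    (h12 : j₁ < j₂) (h12' : j₁' < j₂')
    (h1 : r j₁ = some a) (h2 : r j₂ = some b)
    (h0 : ∀ j, j ≠ j₁ → j ≠ j₂ → r j = none)
    (h1' : r' j₁' = some a') (h2' : r' j₂' = some b')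
    (h0' : ∀ j, j ≠ j₁' → j ≠ j₂' → r' j = none) :
    unitCost (some a) (some a') + unitCost (some b) (some b') ≤
      ∑ j, unitCost (r j) (r' j) := by
  by_cases hA : j₁ = j₁' ∧ j₂ = j₂'
  · obtain ⟨e1, e2⟩ := hA
    have hsum : ∑ j, unitCost (r j) (r' j)
        = ∑ j ∈ ({j₁, j₂} : Finset (Fin t)), unitCost (r j) (r' j) := by
      refine (Finset.sum_subset (Finset.subset_univ _) ?_).symm
      intro j _ hj
      simp only [Finset.mem_insert, Finset.mem_singleton, not_or] at hj
      rw [h0 j hj.1 hj.2, h0' j (e1 ▸ hj.1) (e2 ▸ hj.2)]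
      simp [unitCost]
    rw [hsum, Finset.sum_pair h12.ne, h1, h2, e1, e2, h1', h2']
  · -- find two distinct columns each of cost 1
    have key : ∃ p q : Fin t, p ≠ q ∧ unitCost (r p) (r' p) = 1 ∧
        unitCost (r q) (r' q) = 1 := by
      by_cases e1 : j₁ = j₁'
      · have e2 : j₂ ≠ j₂' := fun h => hA ⟨e1, h⟩
        refine ⟨j₂, j₂', e2, ?_, ?_⟩
        · rw [h2, h0' j₂ (by rw [← e1]; exact h12.ne') e2]
          simp [unitCost]
        · rw [h2', h0 j₂' (by rw [e1]; exact h12'.ne') (Ne.symm e2)]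
          simp [unitCost]
      · by_cases e2 : j₂ = j₂'
        · refine ⟨j₁, j₁', e1, ?_, ?_⟩
          · rw [h1, h0' j₁ e1 (by rw [← e2]; exact h12.ne)]
            simp [unitCost]
          · rw [h1', h0 j₁' (Ne.symm e1) (by rw [e2]; exact h12'.ne)]
            simp [unitCost]
        · by_cases e3 : j₁ = j₂'
          · have hlt0 : j₁' < j₁ := by rw [e3]; exact h12'
            have hlt : j₁' < j₂ := hlt0.trans h12
            refine ⟨j₂, j₁', hlt.ne', ?_, ?_⟩
            · rw [h2, h0' j₂ hlt.ne' (by rw [← e3]; exact h12.ne')]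
              simp [unitCost]
            · rw [h1', h0 j₁' hlt0.ne hlt.ne]
              simp [unitCost]
          · refine ⟨j₁, j₂', e3, ?_, ?_⟩
            · rw [h1, h0' j₁ e1 e3]
              simp [unitCost]
            · rw [h2', h0 j₂' (Ne.symm e3) (Ne.symm e2)]
              simp [unitCost]
    obtain ⟨p, q, hpq, hp, hq⟩ := key
    calc unitCost (some a) (some a') + unitCost (some b) (some b')
        ≤ 1 + 1 := add_le_add (unitCost_le_one _ _) (unitCost_le_one _ _)
      _ = ∑ j ∈ ({p, q} : Finset (Fin t)), unitCost (r j) (r' j) := by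
          rw [Finset.sum_pair hpq, hp, hq]
      _ ≤ ∑ j, unitCost (r j) (r' j) :=
          Finset.sum_le_sum_of_subset (Finset.subset_univ _)

/-- Under the unit metric, every alignment of `k` length-2 sequences costs at least the cost
of the trivial gap-free 2-column alignment, which is
`∑_{m<m'} d(s₁ m, s₁ m') + ∑_{m<m'} d(s₂ m, s₂ m')`; hence the trivial alignment is optimal. -/
theorem stmt_11 {σ : Type*} [DecidableEq σ] {k : ℕ} (s₁ s₂ : Fin k → σ) :
    (∀ t (M : Fin k → Fin t → Option σ), IsAlignment2 s₁ s₂ M →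
      (∑ m, ∑ m' ∈ Finset.Ioi m, unitCost (some (s₁ m)) (some (s₁ m'))) +
        (∑ m, ∑ m' ∈ Finset.Ioi m, unitCost (some (s₂ m)) (some (s₂ m'))) ≤ sopCost M) ∧
    sopCost (fun m => ![some (s₁ m), some (s₂ m)]) =
      (∑ m, ∑ m' ∈ Finset.Ioi m, unitCost (some (s₁ m)) (some (s₁ m'))) +
        (∑ m, ∑ m' ∈ Finset.Ioi m, unitCost (some (s₂ m)) (some (s₂ m'))) := by
  constructor
  · intro t M hM
    rw [← Finset.sum_add_distrib]
    unfold sopCost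
    refine Finset.sum_le_sum fun m _ => ?_
    rw [← Finset.sum_add_distrib]
    refine Finset.sum_le_sum fun m' _ => ?_
    obtain ⟨j₁, j₂, h12, h1, h2, h0⟩ := hM m
    obtain ⟨j₁', j₂', h12', h1', h2', h0'⟩ := hM m'
    exact pair_ge (M m) (M m') _ _ _ _ j₁ j₂ j₁' j₂' h12 h12' h1 h2 h0 h1' h2' h0'
  · unfold sopCost
    rw [← Finset.sum_add_distrib]
    refine Finset.sum_congr rfl fun m _ => ?_
    rw [← Finset.sum_add_distrib]
    refine Finset.sum_congr rfl fun m' _ => ?_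
    simp [Fin.sum_univ_two]
end
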